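/- One has 0 < 2r − S̃₁(ψ,r) (so the logarithm below is defined), and the least integer k ≥ 0 such that ρ(k) > 1/2 equals k* = K₁(ψ,r) + ĩnt[log((2r − S̃₁(ψ,r))/(2r − 1/2))/log 2]. (In the paper this k* is the minimal number of Newton–Raphson iterations needed so that ‖θ̂ₙ^{(k*)} − θ̂ₙ‖ = o_P(n^{−1/2}), i.e. so that the k*-step estimator is semiparametric efficient.) -/

import Mathlib

/-!
Up to `K₁ = K₁(ψ,r)` the rate is `ρ(k) = S₁(ψ,k)`, which stays below `r ≤ 1/2`, and `K₁` is the
first index where it reaches `r`. From then on `ρ(k) ≥ r`, so while `ρ(k) ≤ 1/2` the recursion is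
the contraction `x ↦ r + x/2` towards `2r` (at `ρ(k) = 1/2` the third branch gives the same value
`r + 1/4`). Hence `ρ(K₁ + j) = 2r − (2r − S̃₁)/2^j` as long as the earlier values are `≤ 1/2`, and
this exceeds `1/2` exactly when `(2r − S̃₁)/(2r − 1/2) < 2^j`.
-/

/-- `intLe x` is the smallest nonnegative integer `≥ x` (the paper's `int[x]`). -/
noncomputable def intLe (x : ℝ) : ℕ := sInf {k : ℕ | x ≤ (k : ℝ)}

/-- `intLt x` is the smallest nonnegative integer `> x` (the paper's `ĩnt[x]`). -/
noncomputable def intLt (x : ℝ) : ℕ := sInf {k : ℕ | x < (k : ℝ)}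

/-- The rate sequence `ρ` of Lemma 1: `ρ(0) = ψ` and the three-stage recursion. -/
noncomputable def rateSeq (r ψ : ℝ) : ℕ → ℝ
  | 0 => ψ
  | k + 1 =>
    if rateSeq r ψ k < r then (3 / 2) * rateSeq r ψ k
    else if rateSeq r ψ k < 1 / 2 then r + rateSeq r ψ k / 2
    else r + 1 / 4

/-- `S₁(ψ,k) = ψ (3/2)^k`. -/
noncomputable def S1 (ψ : ℝ) (k : ℕ) : ℝ := ψ * (3 / 2) ^ k

/-- `K₁(ψ,r) = int[log(r/ψ)/log(3/2)]`. -/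
noncomputable def K1 (ψ r : ℝ) : ℕ := intLe (Real.log (r / ψ) / Real.log (3 / 2))

/-- `S̃₁(ψ,r) = S₁(ψ, K₁(ψ,r))`. -/
noncomputable def S1t (ψ r : ℝ) : ℝ := S1 ψ (K1 ψ r)

open Real

theorem intLe_le_iff {x : ℝ} {k : ℕ} : intLe x ≤ k ↔ x ≤ k :=
  ⟨fun h => le_trans (Nat.sInf_mem (exists_nat_ge x) : x ≤ intLe x) (by exact_mod_cast h),
    fun h => Nat.sInf_le h⟩

theorem intLt_le_iff {x : ℝ} {k : ℕ} : intLt x ≤ k ↔ x < k :=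
  ⟨fun h => lt_of_lt_of_le (Nat.sInf_mem (exists_nat_gt x) : x < intLt x) (by exact_mod_cast h),
    fun h => Nat.sInf_le h⟩

section Logb

variable {b x : ℝ} (hb : 1 < b) (hx : 0 < x) (k : ℕ)
include hb hx

theorem intLe_log_div_log_le_iff : intLe (log x / log b) ≤ k ↔ x ≤ b ^ k := by
  rw [intLe_le_iff, log_div_log, logb_le_iff_le_rpow hb hx, rpow_natCast]

theorem intLt_log_div_log_le_iff : intLt (log x / log b) ≤ k ↔ x < b ^ k := by
  rw [intLt_le_iff, log_div_log, logb_lt_iff_lt_rpow hb hx, rpow_natCast]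

end Logb

section K1

variable {ψ r : ℝ} (hψ : 0 < ψ) (hr : 0 < r)
include hψ hr

theorem K1_le_iff {k : ℕ} : K1 ψ r ≤ k ↔ r ≤ S1 ψ k := by
  rw [K1, intLe_log_div_log_le_iff (by norm_num) (div_pos hr hψ), div_le_iff₀ hψ, S1, mul_comm]

theorem le_S1t : r ≤ S1t ψ r :=
  (K1_le_iff hψ hr).mp le_rfl

theorem S1_lt_of_lt_K1 {k : ℕ} (hk : k < K1 ψ r) : S1 ψ k < r :=
  not_le.mp fun h => hk.not_ge ((K1_le_iff hψ hr).mpr h)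

end K1

theorem S1t_lt_two_mul {ψ r : ℝ} (hψ₀ : 0 < ψ) (hr : 0 < r) (hψ : ψ < 2 * r) :
    S1t ψ r < 2 * r := by
  rcases Nat.eq_zero_or_eq_succ_pred (K1 ψ r) with hK | hK
  · simpa only [S1t, S1, hK, pow_zero, mul_one] using hψ
  · have hprev : S1 ψ (K1 ψ r).pred < r := S1_lt_of_lt_K1 hψ₀ hr (by omega)
    rw [S1t, hK, S1, pow_succ, ← mul_assoc, ← S1]
    linarith

theorem intLt_le_iff_half_lt {r s : ℝ} (hr : 1 / 4 < r) (hs : s < 2 * r) (j : ℕ) :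
    intLt (log ((2 * r - s) / (2 * r - 1 / 2)) / log 2) ≤ j ↔
      1 / 2 < 2 * r - (2 * r - s) / 2 ^ j := by
  have hh : 0 < 2 * r - 1 / 2 := by linarith
  rw [intLt_log_div_log_le_iff one_lt_two (div_pos (by linarith) hh),
    div_lt_comm₀ hh (by positivity)]
  constructor <;> intro <;> linarith

namespace rateSeq

variable {r ψ : ℝ} {k : ℕ}

theorem succ_of_lt (h : rateSeq r ψ k < r) : rateSeq r ψ (k + 1) = 3 / 2 * rateSeq r ψ k := by
  rw [rateSeq, if_pos h]

theorem succ_of_le (h₁ : r ≤ rateSeq r ψ k) (h₂ : rateSeq r ψ k ≤ 1 / 2) :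
    rateSeq r ψ (k + 1) = r + rateSeq r ψ k / 2 := by
  rw [rateSeq, if_neg h₁.not_gt]
  rcases h₂.lt_or_eq with h₂ | h₂
  · rw [if_pos h₂]
  · rw [if_neg h₂.not_lt, h₂]
    norm_num

theorem le_succ (hr : 0 ≤ r) (h : r ≤ rateSeq r ψ k) : r ≤ rateSeq r ψ (k + 1) := by
  rw [rateSeq, if_neg h.not_gt]
  split_ifs <;> linarith

theorem le_add (hr : 0 ≤ r) (h : r ≤ rateSeq r ψ k) (j : ℕ) : r ≤ rateSeq r ψ (k + j) := by
  induction j with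
  | zero => exact h
  | succ j ih => exact le_succ hr ih

theorem eq_S1 (h : ∀ i < k, S1 ψ i < r) : rateSeq r ψ k = S1 ψ k := by
  induction k with
  | zero => simp [rateSeq, S1]
  | succ k ih =>
    have hk : rateSeq r ψ k = S1 ψ k := ih fun i hi => h i (by omega)
    rw [succ_of_lt (hk ▸ h k k.lt_succ_self), hk, S1, S1, pow_succ]
    ring

theorem add_eq (hr : 0 ≤ r) (h : r ≤ rateSeq r ψ k) {j : ℕ}
    (hj : ∀ i < j, 2 * r - (2 * r - rateSeq r ψ k) / 2 ^ i ≤ 1 / 2) :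
    rateSeq r ψ (k + j) = 2 * r - (2 * r - rateSeq r ψ k) / 2 ^ j := by
  induction j with
  | zero => simp
  | succ j ih =>
    have hkj := ih fun i hi => hj i (by omega)
    rw [← add_assoc, succ_of_le (le_add hr h j) (hkj ▸ hj j j.lt_succ_self), hkj, pow_succ]
    field_simp
    ring

end rateSeq

/-- `0 < 2r − S̃₁(ψ,r)`, and the least `k ≥ 0` with `ρ(k) > 1/2`
equals `k* = K₁(ψ,r) + ĩnt[log((2r − S̃₁(ψ,r))/(2r − 1/2))/log 2]`. -/
theorem kstar_formula (r ψ : ℝ) (hr1 : 1 / 4 < r) (hr2 : r ≤ 1 / 2)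
    (hψ1 : 0 < ψ) (hψ2 : ψ ≤ 1 / 2) :
    0 < 2 * r - S1t ψ r ∧
    sInf {k : ℕ | 1 / 2 < rateSeq r ψ k} =
      K1 ψ r + intLt (Real.log ((2 * r - S1t ψ r) / (2 * r - 1 / 2)) / Real.log 2) := by
  have hr : 0 < r := by linarith
  have hs : S1t ψ r < 2 * r := S1t_lt_two_mul hψ1 hr (by linarith)
  set K := K1 ψ r
  set J := intLt (log ((2 * r - S1t ψ r) / (2 * r - 1 / 2)) / log 2)
  have hJ := intLt_le_iff_half_lt hr1 hs
  have hρK : rateSeq r ψ K = S1t ψ r := rateSeq.eq_S1 fun i => S1_lt_of_lt_K1 hψ1 hr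
  have hρKJ {j : ℕ} (hj : j ≤ J) :
      rateSeq r ψ (K + j) = 2 * r - (2 * r - S1t ψ r) / 2 ^ j := by
    rw [← hρK]
    refine rateSeq.add_eq hr.le (hρK ▸ le_S1t hψ1 hr) fun i hi => ?_
    rw [hρK]
    exact not_lt.mp fun h => ((hJ i).mpr h).not_gt (by omega)
  refine ⟨sub_pos.mpr hs, IsLeast.csInf_eq ⟨?_, fun m hm => ?_⟩⟩
  · show 1 / 2 < rateSeq r ψ (K + J)
    rw [hρKJ le_rfl]
    exact (hJ J).mp le_rfl
  · by_contra! hlt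
    have hm : 1 / 2 < rateSeq r ψ m := hm
    rcases lt_or_ge m K with hmK | hmK
    · rw [rateSeq.eq_S1 fun i hi => S1_lt_of_lt_K1 hψ1 hr (hi.trans hmK)] at hm
      linarith [S1_lt_of_lt_K1 hψ1 hr hmK]
    · obtain ⟨i, rfl⟩ := Nat.exists_eq_add_of_le hmK
      rw [hρKJ (by omega)] at hm
      exact absurd ((hJ i).mpr hm) (by omega)
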